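/- arXiv:1302.0399 — 12 statements merged into one kernel-verified Lean document; each statement's English description precedes it below -/
import Mathlib

section
/- Let (A, ·) be a (possibly non-unital) associative algebra over a field k and let f : A → A be a linear map satisfying f(x·y) = x·f(y) for all x, y ∈ A (a left semi-homomorphism). Define x ∘₁ y := x·y and x ∘₂ y := f(x)·y. Then (A, ∘₁, ∘₂) is a matching dialgebra; that is, ∘₁ and ∘₂ are both associative and satisfy (x ∘₁ y) ∘₂ z = x ∘₁ (y ∘₂ z) and (x ∘₂ y) ∘₁ z = x ∘₂ (y ∘₁ z) for all x, y, z ∈ A. -/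
theorem map_mul_mul_eq_mul_map_mul {A : Type*} [Semigroup A] {f : A → A}
    (hf : ∀ x y : A, f (x * y) = x * f y) (x y z : A) :
    f (x * y) * z = x * (f y * z) := by
  rw [hf, mul_assoc]

theorem matching_dialgebra_of_left_semi_homomorphism_general
    {k A : Type*} [Field k] [NonUnitalRing A] [Module k A]
    (f : A →ₗ[k] A) (hf : ∀ x y : A, f (x * y) = x * f y)
    (o1 o2 : A → A → A)
    (ho1 : ∀ x y : A, o1 x y = x * y)
    (ho2 : ∀ x y : A, o2 x y = f x * y) :
    (∀ x y z : A, o1 (o1 x y) z = o1 x (o1 y z)) ∧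
    (∀ x y z : A, o2 (o2 x y) z = o2 x (o2 y z)) ∧
    (∀ x y z : A, o2 (o1 x y) z = o1 x (o2 y z)) ∧
    (∀ x y z : A, o1 (o2 x y) z = o2 x (o1 y z)) := by
  refine ⟨fun x y z => ?_, fun x y z => ?_, fun x y z => ?_, fun x y z => ?_⟩ <;>
    simp only [ho1, ho2]
  · exact mul_assoc x y z
  · exact map_mul_mul_eq_mul_map_mul hf (f x) y z
  · exact map_mul_mul_eq_mul_map_mul hf x y z
  · exact mul_assoc (f x) y z

/-- If `f` is a left semi-homomorphism of a (possibly non-unital) associative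
`k`-algebra `A`, i.e. `f (x * y) = x * f y`, then `x ∘₁ y := x * y` and
`x ∘₂ y := f x * y` make `A` a matching dialgebra: both products are
associative and `(x ∘₁ y) ∘₂ z = x ∘₁ (y ∘₂ z)`,
`(x ∘₂ y) ∘₁ z = x ∘₂ (y ∘₁ z)`. -/
theorem matching_dialgebra_of_left_semi_homomorphism
    {k A : Type*} [Field k] [NonUnitalRing A] [Module k A]
    [SMulCommClass k A A] [IsScalarTower k A A]
    (f : A →ₗ[k] A) (hf : ∀ x y : A, f (x * y) = x * f y)
    (o1 o2 : A → A → A)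
    (ho1 : ∀ x y : A, o1 x y = x * y)
    (ho2 : ∀ x y : A, o2 x y = f x * y) :
    (∀ x y z : A, o1 (o1 x y) z = o1 x (o1 y z)) ∧
    (∀ x y z : A, o2 (o2 x y) z = o2 x (o2 y z)) ∧
    (∀ x y z : A, o2 (o1 x y) z = o1 x (o2 y z)) ∧
    (∀ x y z : A, o1 (o2 x y) z = o2 x (o1 y z)) :=
  matching_dialgebra_of_left_semi_homomorphism_general f hf o1 o2 ho1 ho2
end

section
/- Let (A, ·) be a (possibly non-unital) associative algebra over a field k and let f : A → A be a linear map satisfying f(x·y) = f(x)·y for all x, y ∈ A (a right semi-homomorphism). Define x ∘₁ y := x·y and x ∘₂ y := x·f(y). Then (A, ∘₁, ∘₂) is a matching dialgebra; that is, ∘₁ and ∘₂ are both associative and satisfy (x ∘₁ y) ∘₂ z = x ∘₁ (y ∘₂ z) and (x ∘₂ y) ∘₁ z = x ∘₂ (y ∘₁ z) for all x, y, z ∈ A. -/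
section RightSemiHom

variable {A : Type*} [Semigroup A] {f : A → A} (hf : ∀ x y : A, f (x * y) = f x * y)
include hf

theorem mul_map_mul_eq_mul_map_of_map_mul (x y z : A) : x * f y * z = x * f (y * z) := by
  rw [hf, mul_assoc]

theorem mul_map_mul_map_eq_of_map_mul (x y z : A) : x * f y * f z = x * f (y * f z) :=
  mul_map_mul_eq_mul_map_of_map_mul hf x y (f z)

end RightSemiHom

theorem matching_dialgebra_of_right_semi_homomorphism_general
    {k A : Type*} [Field k] [NonUnitalRing A] [Module k A]
    (f : A →ₗ[k] A) (hf : ∀ x y : A, f (x * y) = f x * y)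
    (o1 o2 : A → A → A)
    (ho1 : ∀ x y : A, o1 x y = x * y)
    (ho2 : ∀ x y : A, o2 x y = x * f y) :
    (∀ x y z : A, o1 (o1 x y) z = o1 x (o1 y z)) ∧
    (∀ x y z : A, o2 (o2 x y) z = o2 x (o2 y z)) ∧
    (∀ x y z : A, o2 (o1 x y) z = o1 x (o2 y z)) ∧
    (∀ x y z : A, o1 (o2 x y) z = o2 x (o1 y z)) := by
  obtain rfl : o1 = (· * ·) := funext₂ ho1
  obtain rfl : o2 = (· * f ·) := funext₂ ho2
  exact ⟨mul_assoc, mul_map_mul_map_eq_of_map_mul hf, fun x y z => mul_assoc x y (f z),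
    mul_map_mul_eq_mul_map_of_map_mul hf⟩

/-- If `f` is a right semi-homomorphism of a (possibly non-unital) associative
`k`-algebra `A`, i.e. `f (x * y) = f x * y`, then `x ∘₁ y := x * y` and
`x ∘₂ y := x * f y` make `A` a matching dialgebra. -/
theorem matching_dialgebra_of_right_semi_homomorphism
    {k A : Type*} [Field k] [NonUnitalRing A] [Module k A]
    [SMulCommClass k A A] [IsScalarTower k A A]
    (f : A →ₗ[k] A) (hf : ∀ x y : A, f (x * y) = f x * y)
    (o1 o2 : A → A → A)
    (ho1 : ∀ x y : A, o1 x y = x * y)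
    (ho2 : ∀ x y : A, o2 x y = x * f y) :
    (∀ x y z : A, o1 (o1 x y) z = o1 x (o1 y z)) ∧
    (∀ x y z : A, o2 (o2 x y) z = o2 x (o2 y z)) ∧
    (∀ x y z : A, o2 (o1 x y) z = o1 x (o2 y z)) ∧
    (∀ x y z : A, o1 (o2 x y) z = o2 x (o1 y z)) :=
  matching_dialgebra_of_right_semi_homomorphism_general f hf o1 o2 ho1 ho2
end

section
/- Let A be a k-vector space with two bilinear associative products ∘₁ and ∘₂. Define a bilinear product on the direct sum A ⊕ A by (a, b) · (c, d) := (a ∘₁ c + a ∘₂ d, b ∘₂ d + b ∘₁ c). Then (A, ∘₁, ∘₂) is a matching dialgebra if and only if the product · on A ⊕ A is associative. -/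
/-!
Associativity of `(a, b) · (c, d) = (a ∘₁ c + a ∘₂ d, b ∘₂ d + b ∘₁ c)` can be checked one
component at a time. Once the associativity of `∘₁` and `∘₂` is used, the first component of
`((a, b) · (c, d)) · (e, f) - (a, b) · ((c, d) · (e, f))` is
`((a ∘₁ c) ∘₂ f - a ∘₁ (c ∘₂ f)) + ((a ∘₂ d) ∘₁ e - a ∘₂ (d ∘₁ e))`, whose two summands are
isolated by taking `d = 0` or `c = 0`: these are exactly the two matching identities.
Exchanging the two components of `A × A` exchanges the roles of `∘₁` and `∘₂`, and hence of the
two identities, so the second component gives nothing new.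
-/

namespace MatchingDialgebra

variable {R A : Type*} [CommSemiring R] [AddCommMonoid A] [Module R A]

def matchingMul (o1 o2 : A →ₗ[R] A →ₗ[R] A) (p q : A × A) : A × A :=
  (o1 p.1 q.1 + o2 p.1 q.2, o2 p.2 q.2 + o1 p.2 q.1)

def IsMatching (o1 o2 : A →ₗ[R] A →ₗ[R] A) : Prop :=
  (∀ x y z : A, o2 (o1 x y) z = o1 x (o2 y z)) ∧ (∀ x y z : A, o1 (o2 x y) z = o2 x (o1 y z))

theorem isMatching_comm (o1 o2 : A →ₗ[R] A →ₗ[R] A) : IsMatching o1 o2 ↔ IsMatching o2 o1 :=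
  And.comm

theorem snd_matchingMul (o1 o2 : A →ₗ[R] A →ₗ[R] A) (p q : A × A) :
    (matchingMul o1 o2 p q).2 = (matchingMul o2 o1 p.swap q.swap).1 :=
  rfl

theorem swap_matchingMul (o1 o2 : A →ₗ[R] A →ₗ[R] A) (p q : A × A) :
    (matchingMul o1 o2 p q).swap = matchingMul o2 o1 p.swap q.swap :=
  rfl

variable {o1 o2 : A →ₗ[R] A →ₗ[R] A}

theorem fst_matchingMul_assoc_iff (h1 : ∀ x y z : A, o1 (o1 x y) z = o1 x (o1 y z))
    (h2 : ∀ x y z : A, o2 (o2 x y) z = o2 x (o2 y z)) :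
    (∀ p q r : A × A, (matchingMul o1 o2 (matchingMul o1 o2 p q) r).1 =
      (matchingMul o1 o2 p (matchingMul o1 o2 q r)).1) ↔ IsMatching o1 o2 := by
  constructor
  · intro h
    constructor
    · intro x y z
      simpa [matchingMul, h1, h2] using h (x, 0) (y, 0) (0, z)
    · intro x y z
      simpa [matchingMul, h1, h2] using h (x, 0) (0, y) (z, 0)
  · rintro ⟨h12, h21⟩ ⟨a, b⟩ ⟨c, d⟩ ⟨e, f⟩
    simp only [matchingMul, map_add, LinearMap.add_apply]
    rw [h1, h2, h12, h21]
    abel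

theorem snd_matchingMul_assoc_iff (h1 : ∀ x y z : A, o1 (o1 x y) z = o1 x (o1 y z))
    (h2 : ∀ x y z : A, o2 (o2 x y) z = o2 x (o2 y z)) :
    (∀ p q r : A × A, (matchingMul o1 o2 (matchingMul o1 o2 p q) r).2 =
      (matchingMul o1 o2 p (matchingMul o1 o2 q r)).2) ↔ IsMatching o1 o2 := by
  simp only [snd_matchingMul, swap_matchingMul]
  rw [isMatching_comm, ← fst_matchingMul_assoc_iff h2 h1]
  exact ⟨fun h p q r => by simpa using h p.swap q.swap r.swap, fun h p q r => h _ _ _⟩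

theorem matchingMul_assoc_iff (h1 : ∀ x y z : A, o1 (o1 x y) z = o1 x (o1 y z))
    (h2 : ∀ x y z : A, o2 (o2 x y) z = o2 x (o2 y z)) :
    (∀ p q r : A × A, matchingMul o1 o2 (matchingMul o1 o2 p q) r =
      matchingMul o1 o2 p (matchingMul o1 o2 q r)) ↔ IsMatching o1 o2 := by
  simp only [Prod.ext_iff, forall_and, fst_matchingMul_assoc_iff h1 h2,
    snd_matchingMul_assoc_iff h1 h2, and_self]

end MatchingDialgebra

/-- For a `k`-vector space `A` with two bilinear associative products `o1`, `o2`,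
define on `A ⊕ A` the product `(a, b) · (c, d) = (a ∘₁ c + a ∘₂ d, b ∘₂ d + b ∘₁ c)`.
Then `(A, o1, o2)` is a matching dialgebra if and only if this product is
associative. -/
theorem matching_dialgebra_iff_directSum_assoc_left
    {k A : Type*} [Field k] [AddCommGroup A] [Module k A]
    (o1 o2 : A →ₗ[k] A →ₗ[k] A)
    (h1 : ∀ x y z : A, o1 (o1 x y) z = o1 x (o1 y z))
    (h2 : ∀ x y z : A, o2 (o2 x y) z = o2 x (o2 y z))
    (m : A × A → A × A → A × A)
    (hm : ∀ a b c d : A,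
      m (a, b) (c, d) = (o1 a c + o2 a d, o2 b d + o1 b c)) :
    ((∀ x y z : A, o2 (o1 x y) z = o1 x (o2 y z)) ∧
     (∀ x y z : A, o1 (o2 x y) z = o2 x (o1 y z))) ↔
    (∀ p q r : A × A, m (m p q) r = m p (m q r)) := by
  obtain rfl : m = MatchingDialgebra.matchingMul o1 o2 := funext₂ fun p q => hm p.1 p.2 q.1 q.2
  exact (MatchingDialgebra.matchingMul_assoc_iff h1 h2).symm
end

section
/- Let A be a k-vector space with two bilinear associative products ∘₁ and ∘₂. Define a bilinear product on the direct sum A ⊕ A by (a, b) ∘ (c, d) := (a ∘₁ c + b ∘₂ c, b ∘₂ d + a ∘₁ d). Then (A, ∘₁, ∘₂) is a matching dialgebra if and only if the product ∘ on A ⊕ A is associative. -/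
/-!
Expanding both sides of associativity of `∘` on `A × A`, the terms pair up as the two
associativity laws and the two matching compatibilities, so these four laws imply associativity.
Conversely, the compatibilities are the first component of associativity on the triple
`(x, 0), (0, y), (z, 0)` and the second component on `(0, x), (y, 0), (0, z)`.
-/

section MatchingProd

variable {R A : Type*} [CommSemiring R] [AddCommMonoid A] [Module R A]
  (o1 o2 : A →ₗ[R] A →ₗ[R] A)

def matchingProd (p q : A × A) : A × A :=
  (o1 p.1 q.1 + o2 p.2 q.1, o2 p.2 q.2 + o1 p.1 q.2)

variable {o1 o2}

theorem eq_matchingProd {m : A × A → A × A → A × A}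
    (hm : ∀ a b c d : A, m (a, b) (c, d) = (o1 a c + o2 b c, o2 b d + o1 a d)) :
    m = matchingProd o1 o2 := by
  funext ⟨a, b⟩ ⟨c, d⟩
  exact hm a b c d

theorem matchingProd_assoc
    (h1 : ∀ x y z : A, o1 (o1 x y) z = o1 x (o1 y z))
    (h2 : ∀ x y z : A, o2 (o2 x y) z = o2 x (o2 y z))
    (h12 : ∀ x y z : A, o2 (o1 x y) z = o1 x (o2 y z))
    (h21 : ∀ x y z : A, o1 (o2 x y) z = o2 x (o1 y z)) (p q r : A × A) :
    matchingProd o1 o2 (matchingProd o1 o2 p q) r =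
      matchingProd o1 o2 p (matchingProd o1 o2 q r) := by
  simp only [matchingProd, map_add, LinearMap.add_apply, Prod.mk.injEq, h1, h2, h12, h21]
  constructor <;> abel

variable (H : ∀ p q r : A × A,
  matchingProd o1 o2 (matchingProd o1 o2 p q) r = matchingProd o1 o2 p (matchingProd o1 o2 q r))
include H

theorem matching_compat_left_of_matchingProd_assoc (x y z : A) :
    o2 (o1 x y) z = o1 x (o2 y z) := by
  simpa [matchingProd] using congrArg Prod.fst (H (x, 0) (0, y) (z, 0))

theorem matching_compat_right_of_matchingProd_assoc (x y z : A) :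
    o1 (o2 x y) z = o2 x (o1 y z) := by
  simpa [matchingProd] using congrArg Prod.snd (H (0, x) (y, 0) (0, z))

end MatchingProd

/-- For a `k`-vector space `A` with two bilinear associative products `o1`, `o2`,
define on `A ⊕ A` the product `(a, b) ∘ (c, d) = (a ∘₁ c + b ∘₂ c, b ∘₂ d + a ∘₁ d)`.
Then `(A, o1, o2)` is a matching dialgebra if and only if this product is
associative. -/
theorem matching_dialgebra_iff_directSum_assoc_right
    {k A : Type*} [Field k] [AddCommGroup A] [Module k A]
    (o1 o2 : A →ₗ[k] A →ₗ[k] A)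
    (h1 : ∀ x y z : A, o1 (o1 x y) z = o1 x (o1 y z))
    (h2 : ∀ x y z : A, o2 (o2 x y) z = o2 x (o2 y z))
    (m : A × A → A × A → A × A)
    (hm : ∀ a b c d : A,
      m (a, b) (c, d) = (o1 a c + o2 b c, o2 b d + o1 a d)) :
    ((∀ x y z : A, o2 (o1 x y) z = o1 x (o2 y z)) ∧
     (∀ x y z : A, o1 (o2 x y) z = o2 x (o1 y z))) ↔
    (∀ p q r : A × A, m (m p q) r = m p (m q r)) := by
  obtain rfl := eq_matchingProd hm
  exact ⟨fun ⟨h12, h21⟩ => matchingProd_assoc h1 h2 h12 h21,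
    fun H => ⟨matching_compat_left_of_matchingProd_assoc H,
      matching_compat_right_of_matchingProd_assoc H⟩⟩
end

section
/- Let (A, ∘₁, ∘₂) be a matching dialgebra over a field k. Then the associative products ∘₁ and ∘₂ are compatible: for all scalars α, β ∈ k, the bilinear product x ⋆ y := α (x ∘₁ y) + β (x ∘₂ y) is associative, i.e. (x ⋆ y) ⋆ z = x ⋆ (y ⋆ z) for all x, y, z ∈ A. -/
theorem LinearMap.smul_add_smul_assoc_of_compatible {R M : Type*} [CommSemiring R]
    [AddCommMonoid M] [Module R M] (μ ν : M →ₗ[R] M →ₗ[R] M)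
    (hμ : ∀ x y z, μ (μ x y) z = μ x (μ y z)) (hν : ∀ x y z, ν (ν x y) z = ν x (ν y z))
    (hμν : ∀ x y z, ν (μ x y) z + μ (ν x y) z = μ x (ν y z) + ν x (μ y z))
    (a b : R) (x y z : M) :
    (a • μ + b • ν) ((a • μ + b • ν) x y) z = (a • μ + b • ν) x ((a • μ + b • ν) y z) := by
  simp only [add_apply, smul_apply, map_add, map_smul, smul_add, smul_smul, hμ, hν,
    mul_comm b a, ← add_assoc]
  rw [add_assoc (_ • _) ((a * b) • _), ← smul_add, hμν, smul_add]
  abel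

/-- In a matching dialgebra `(A, o1, o2)` over a field `k`, the two associative
products are compatible: every linear combination `x ⋆ y = α • (x ∘₁ y) + β • (x ∘₂ y)`
is associative. -/
theorem matching_dialgebra_compatible_associative
    {k A : Type*} [Field k] [AddCommGroup A] [Module k A]
    (o1 o2 : A →ₗ[k] A →ₗ[k] A)
    (h1 : ∀ x y z : A, o1 (o1 x y) z = o1 x (o1 y z))
    (h2 : ∀ x y z : A, o2 (o2 x y) z = o2 x (o2 y z))
    (h12 : ∀ x y z : A, o2 (o1 x y) z = o1 x (o2 y z))
    (h21 : ∀ x y z : A, o1 (o2 x y) z = o2 x (o1 y z)) :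
    ∀ (α β : k) (star : A → A → A),
      (∀ x y : A, star x y = α • o1 x y + β • o2 x y) →
      ∀ x y z : A, star (star x y) z = star x (star y z) := by
  intro α β star hstar x y z
  have hcompat : ∀ x y z : A, o2 (o1 x y) z + o1 (o2 x y) z = o1 x (o2 y z) + o2 x (o1 y z) :=
    fun x y z => by rw [h12, h21]
  simpa only [hstar, LinearMap.add_apply, LinearMap.smul_apply] using
    LinearMap.smul_add_smul_assoc_of_compatible o1 o2 h1 h2 hcompat α β x y z
end

section
/- Let (A, ∘₁, ∘₂) be a matching dialgebra over a field k and define the brackets [x, y]₁ := x ∘₁ y − y ∘₁ x and [x, y]₂ := x ∘₂ y − y ∘₂ x. Then the Lie brackets [,]₁ and [,]₂ are compatible: for all scalars α, β ∈ k, the bracket [x, y] := α [x, y]₁ + β [x, y]₂ is a Lie bracket on A, i.e. it is bilinear, skew-symmetric ([x, y] = −[y, x]), and satisfies the Jacobi identity [[x, y], z] + [[z, x], y] + [[y, z], x] = 0 for all x, y, z ∈ A. -/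
/-!
Any linear combination `α ∘₁ + β ∘₂` of the two products of a matching dialgebra is again
associative: expanding both sides of the associativity law, the `α²` and `β²` terms agree by
associativity of `∘₁` and `∘₂`, and the two mixed `αβ` terms agree by the two matching
identities.
The bracket `α [x, y]₁ + β [x, y]₂` is the commutator of this associative product, and the
commutator of any associative product is a Lie bracket.
-/

namespace LinearMap

variable {R A : Type*} [CommRing R] [AddCommGroup A] [Module R A]

theorem smul_add_smul_assoc_of_matching (o1 o2 : A →ₗ[R] A →ₗ[R] A)
    (h1 : ∀ x y z : A, o1 (o1 x y) z = o1 x (o1 y z))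
    (h2 : ∀ x y z : A, o2 (o2 x y) z = o2 x (o2 y z))
    (h12 : ∀ x y z : A, o2 (o1 x y) z = o1 x (o2 y z))
    (h21 : ∀ x y z : A, o1 (o2 x y) z = o2 x (o1 y z)) (α β : R) (x y z : A) :
    (α • o1 + β • o2) ((α • o1 + β • o2) x y) z
      = (α • o1 + β • o2) x ((α • o1 + β • o2) y z) := by
  simp only [add_apply, smul_apply, map_add, map_smul, h1, h2, h12, h21]
  module

theorem sub_flip_jacobi_of_assoc (m : A →ₗ[R] A →ₗ[R] A)
    (hm : ∀ x y z : A, m (m x y) z = m x (m y z)) (x y z : A) :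
    (m - m.flip) ((m - m.flip) x y) z + (m - m.flip) ((m - m.flip) z x) y
      + (m - m.flip) ((m - m.flip) y z) x = 0 := by
  simp only [sub_apply, flip_apply, map_sub, hm]
  abel

end LinearMap

/-- In a matching dialgebra `(A, o1, o2)` over a field `k`, the commutator brackets
`[x,y]₁ = x ∘₁ y - y ∘₁ x` and `[x,y]₂ = x ∘₂ y - y ∘₂ x` are compatible Lie
brackets: every linear combination `[x,y] = α • [x,y]₁ + β • [x,y]₂` is bilinear,
skew-symmetric and satisfies the Jacobi identity. -/
theorem matching_dialgebra_compatible_lie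
    {k A : Type*} [Field k] [AddCommGroup A] [Module k A]
    (o1 o2 : A →ₗ[k] A →ₗ[k] A)
    (h1 : ∀ x y z : A, o1 (o1 x y) z = o1 x (o1 y z))
    (h2 : ∀ x y z : A, o2 (o2 x y) z = o2 x (o2 y z))
    (h12 : ∀ x y z : A, o2 (o1 x y) z = o1 x (o2 y z))
    (h21 : ∀ x y z : A, o1 (o2 x y) z = o2 x (o1 y z)) :
    ∀ (α β : k) (br : A → A → A),
      (∀ x y : A, br x y = α • (o1 x y - o1 y x) + β • (o2 x y - o2 y x)) →
      ((∀ x x' y : A, br (x + x') y = br x y + br x' y) ∧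
       (∀ (c : k) (x y : A), br (c • x) y = c • br x y) ∧
       (∀ x y y' : A, br x (y + y') = br x y + br x y') ∧
       (∀ (c : k) (x y : A), br x (c • y) = c • br x y) ∧
       (∀ x y : A, br x y = -br y x) ∧
       (∀ x y z : A, br (br x y) z + br (br z x) y + br (br y z) x = 0)) := by
  intro α β br hbr
  set m := α • o1 + β • o2
  have hbr_eq : ∀ x y, br x y = (m - m.flip) x y := fun x y => by
    simp only [hbr, m, LinearMap.sub_apply, LinearMap.flip_apply, LinearMap.add_apply,
      LinearMap.smul_apply]
    module
  simp only [hbr_eq]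
  refine ⟨fun _ _ _ => by simp only [map_add, LinearMap.add_apply],
    fun _ _ _ => by simp only [map_smul, LinearMap.smul_apply],
    fun _ _ _ => map_add _ _ _, fun _ _ _ => map_smul _ _ _,
    fun x y => by simp only [LinearMap.sub_apply, LinearMap.flip_apply, neg_sub],
    LinearMap.sub_flip_jacobi_of_assoc m
      (LinearMap.smul_add_smul_assoc_of_matching o1 o2 h1 h2 h12 h21 α β)⟩
end

section
/- Let (A, ∘₁, ∘₂) be a matching dialgebra over a field k. Define [x, y]₁ := x ∘₁ y − y ∘₁ x, [x, y]₂ := x ∘₂ y − y ∘₂ x, and [x, y]₍₁,₂₎ := x ∘₁ y − y ∘₂ x. Then for all x, y, z ∈ A: [[x,y]₍₁,₂₎, z]₍₁,₂₎ − [x, [y,z]₍₁,₂₎]₍₁,₂₎ − ([[y,x]₍₁,₂₎, z]₍₁,₂₎ − [y, [x,z]₍₁,₂₎]₍₁,₂₎) = ([x,y]₂) ∘₁ z − z ∘₂ ([x,y]₁). -/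
/-!
The associativity and matching axioms cancel the two "pure" terms of the associator of
`[x, y] = x ∘₁ y - y ∘₂ x` and rewrite the two mixed ones, leaving
`x ∘₁ (z ∘₂ y) + y ∘₁ (z ∘₂ x) - y ∘₂ (x ∘₁ z) - z ∘₂ (x ∘₁ y)`.
The first two terms are symmetric in `x, y`, so they drop out of the antisymmetrization, and the
remaining ones are the right-hand side after one more matching rewrite.
-/

section MatchingDialgebra

variable {R A : Type*} [CommSemiring R] [AddCommGroup A] [Module R A]

structure IsMatchingDialgebra (o1 o2 : A →ₗ[R] A →ₗ[R] A) : Prop where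
  assoc₁ : ∀ x y z : A, o1 (o1 x y) z = o1 x (o1 y z)
  assoc₂ : ∀ x y z : A, o2 (o2 x y) z = o2 x (o2 y z)
  match₁₂ : ∀ x y z : A, o2 (o1 x y) z = o1 x (o2 y z)
  match₂₁ : ∀ x y z : A, o1 (o2 x y) z = o2 x (o1 y z)

def matchingBracket (o1 o2 : A →ₗ[R] A →ₗ[R] A) (x y : A) : A :=
  o1 x y - o2 y x

theorem IsMatchingDialgebra.matchingBracket_associator {o1 o2 : A →ₗ[R] A →ₗ[R] A}
    (hA : IsMatchingDialgebra o1 o2) (x y z : A) :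
    matchingBracket o1 o2 (matchingBracket o1 o2 x y) z -
        matchingBracket o1 o2 x (matchingBracket o1 o2 y z) =
      o1 x (o2 z y) + o1 y (o2 z x) - o2 y (o1 x z) - o2 z (o1 x y) := by
  simp only [matchingBracket, map_sub, LinearMap.sub_apply,
    hA.assoc₁, hA.assoc₂, hA.match₁₂, hA.match₂₁]
  abel

end MatchingDialgebra

/-- In a matching dialgebra `(A, o1, o2)`, with `[x,y]_{1,2} := x ∘₁ y - y ∘₂ x`,
the deviation of `[,]_{1,2}` from being pre-Lie equals
`([x,y]₂) ∘₁ z - z ∘₂ ([x,y]₁)`. -/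
theorem matching_dialgebra_preLie_deviation_left
    {k A : Type*} [Field k] [AddCommGroup A] [Module k A]
    (o1 o2 : A →ₗ[k] A →ₗ[k] A)
    (h1 : ∀ x y z : A, o1 (o1 x y) z = o1 x (o1 y z))
    (h2 : ∀ x y z : A, o2 (o2 x y) z = o2 x (o2 y z))
    (h12 : ∀ x y z : A, o2 (o1 x y) z = o1 x (o2 y z))
    (h21 : ∀ x y z : A, o1 (o2 x y) z = o2 x (o1 y z))
    (br : A → A → A) (hbr : ∀ x y : A, br x y = o1 x y - o2 y x) :
    ∀ x y z : A,
      br (br x y) z - br x (br y z) - (br (br y x) z - br y (br x z)) =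
        o1 (o2 x y - o2 y x) z - o2 z (o1 x y - o1 y x) := by
  intro x y z
  have hA : IsMatchingDialgebra o1 o2 := ⟨h1, h2, h12, h21⟩
  obtain rfl : br = matchingBracket o1 o2 := funext₂ hbr
  rw [hA.matchingBracket_associator, hA.matchingBracket_associator]
  simp only [map_sub, LinearMap.sub_apply, h21]
  abel
end

section
/- Let (A, ∘₁, ∘₂) be a matching dialgebra over a field k. Define [x, y]₁ := x ∘₁ y − y ∘₁ x, [x, y]₂ := x ∘₂ y − y ∘₂ x, and [x, y]₍₂,₁₎ := x ∘₂ y − y ∘₁ x. Then for all x, y, z ∈ A: [[x,y]₍₂,₁₎, z]₍₂,₁₎ − [x, [y,z]₍₂,₁₎]₍₂,₁₎ − ([[y,x]₍₂,₁₎, z]₍₂,₁₎ − [y, [x,z]₍₂,₁₎]₍₂,₁₎) = ([x,y]₁) ∘₂ z − z ∘₁ ([x,y]₂). -/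
/-!
Expanding the associator of `[x, y]₍₂,₁₎ = x ∘₂ y - y ∘₁ x`, the two associativity laws cancel the
terms built from a single product, and the two matching laws move every mixed product to the
form `u ∘₂ (v ∘₁ w)` or `u ∘₁ (v ∘₂ w)`. The associator becomes
`x ∘₂ (z ∘₁ y) + y ∘₂ (z ∘₁ x) - y ∘₁ (x ∘₂ z) - z ∘₁ (x ∘₂ y)`, whose first two terms are symmetric
in `x, y`. Antisymmetrizing leaves `x ∘₁ (y ∘₂ z) - y ∘₁ (x ∘₂ z) - z ∘₁ [x, y]₂`, and the first
two terms equal `[x, y]₁ ∘₂ z` by the matching law once more.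
-/

section

variable {R A : Type*} [CommSemiring R] [AddCommGroup A] [Module R A]
variable (o1 o2 : A →ₗ[R] A →ₗ[R] A)

structure IsMatchingDialgebra_s10 : Prop where
  assoc₁ : ∀ x y z : A, o1 (o1 x y) z = o1 x (o1 y z)
  assoc₂ : ∀ x y z : A, o2 (o2 x y) z = o2 x (o2 y z)
  assoc₁₂ : ∀ x y z : A, o2 (o1 x y) z = o1 x (o2 y z)
  assoc₂₁ : ∀ x y z : A, o1 (o2 x y) z = o2 x (o1 y z)

def dialgebraBracket (x y : A) : A := o2 x y - o1 y x

variable {o1 o2}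

theorem IsMatchingDialgebra_s10.dialgebraBracket_associator (hA : IsMatchingDialgebra_s10 o1 o2)
    (x y z : A) :
    dialgebraBracket o1 o2 (dialgebraBracket o1 o2 x y) z -
        dialgebraBracket o1 o2 x (dialgebraBracket o1 o2 y z) =
      o2 x (o1 z y) + o2 y (o1 z x) - o1 y (o2 x z) - o1 z (o2 x y) := by
  simp only [dialgebraBracket, map_sub, LinearMap.sub_apply,
    hA.assoc₁, hA.assoc₂, hA.assoc₁₂, hA.assoc₂₁]
  abel

end

/-- In a matching dialgebra `(A, o1, o2)`, with `[x,y]_{2,1} := x ∘₂ y - y ∘₁ x`,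
the deviation of `[,]_{2,1}` from being pre-Lie equals
`([x,y]₁) ∘₂ z - z ∘₁ ([x,y]₂)`. -/
theorem matching_dialgebra_preLie_deviation_right
    {k A : Type*} [Field k] [AddCommGroup A] [Module k A]
    (o1 o2 : A →ₗ[k] A →ₗ[k] A)
    (h1 : ∀ x y z : A, o1 (o1 x y) z = o1 x (o1 y z))
    (h2 : ∀ x y z : A, o2 (o2 x y) z = o2 x (o2 y z))
    (h12 : ∀ x y z : A, o2 (o1 x y) z = o1 x (o2 y z))
    (h21 : ∀ x y z : A, o1 (o2 x y) z = o2 x (o1 y z))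
    (br : A → A → A) (hbr : ∀ x y : A, br x y = o2 x y - o1 y x) :
    ∀ x y z : A,
      br (br x y) z - br x (br y z) - (br (br y x) z - br y (br x z)) =
        o2 (o1 x y - o1 y x) z - o1 z (o2 x y - o2 y x) := by
  have hA : IsMatchingDialgebra_s10 o1 o2 := ⟨h1, h2, h12, h21⟩
  obtain rfl : br = dialgebraBracket o1 o2 := funext₂ hbr
  intro x y z
  rw [hA.dialgebraBracket_associator, hA.dialgebraBracket_associator]
  simp only [map_sub, LinearMap.sub_apply, h12]
  abel
end

section
/- Let (A, ∘₁, ∘₂) be a matching dialgebra over a field k in which both products ∘₁ and ∘₂ are commutative. Define x * y := x ∘₁ y − y ∘₂ x. Then (A, *) is a pre-Lie algebra: (x * y) * z − x * (y * z) = (y * x) * z − y * (x * z) for all x, y, z ∈ A. -/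
/-!
Commutativity of `∘₂` turns `x * y` into `(∘₁ - ∘₂) x y`. Expanding the associator of `∘₁ - ∘₂`
gives the associators of `∘₁` and `∘₂` together with the two mixed terms that the matching
conditions cancel, so `*` is associative, and an associative product is trivially pre-Lie.
-/

theorem LinearMap.sub_assoc_of_matching {R A : Type*} [CommSemiring R] [AddCommGroup A]
    [Module R A] (o1 o2 : A →ₗ[R] A →ₗ[R] A)
    (h1 : ∀ x y z : A, o1 (o1 x y) z = o1 x (o1 y z))
    (h2 : ∀ x y z : A, o2 (o2 x y) z = o2 x (o2 y z))
    (h12 : ∀ x y z : A, o2 (o1 x y) z = o1 x (o2 y z))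
    (h21 : ∀ x y z : A, o1 (o2 x y) z = o2 x (o1 y z)) (x y z : A) :
    (o1 - o2) ((o1 - o2) x y) z = (o1 - o2) x ((o1 - o2) y z) := by
  simp only [LinearMap.sub_apply, map_sub, h1, h2, h12, h21]
  abel

theorem matching_dialgebra_comm_preLie_general
    {k A : Type*} [Field k] [AddCommGroup A] [Module k A]
    (o1 o2 : A →ₗ[k] A →ₗ[k] A)
    (h1 : ∀ x y z : A, o1 (o1 x y) z = o1 x (o1 y z))
    (h2 : ∀ x y z : A, o2 (o2 x y) z = o2 x (o2 y z))
    (h12 : ∀ x y z : A, o2 (o1 x y) z = o1 x (o2 y z))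
    (h21 : ∀ x y z : A, o1 (o2 x y) z = o2 x (o1 y z))
    (hc2 : ∀ x y : A, o2 x y = o2 y x)
    (star : A → A → A) (hstar : ∀ x y : A, star x y = o1 x y - o2 y x) :
    ∀ x y z : A,
      star (star x y) z - star x (star y z) =
        star (star y x) z - star y (star x z) := by
  have star_eq : ∀ x y, star x y = (o1 - o2) x y := fun x y => by
    rw [hstar, hc2, LinearMap.sub_apply, LinearMap.sub_apply]
  have star_assoc : ∀ x y z, star (star x y) z = star x (star y z) := fun x y z => by
    simpa only [star_eq] using o1.sub_assoc_of_matching o2 h1 h2 h12 h21 x y z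
  intro x y z
  rw [star_assoc, star_assoc, sub_self, sub_self]

/-- In a matching dialgebra `(A, o1, o2)` with both products commutative,
`x * y := x ∘₁ y - y ∘₂ x` defines a pre-Lie algebra. -/
theorem matching_dialgebra_comm_preLie
    {k A : Type*} [Field k] [AddCommGroup A] [Module k A]
    (o1 o2 : A →ₗ[k] A →ₗ[k] A)
    (h1 : ∀ x y z : A, o1 (o1 x y) z = o1 x (o1 y z))
    (h2 : ∀ x y z : A, o2 (o2 x y) z = o2 x (o2 y z))
    (h12 : ∀ x y z : A, o2 (o1 x y) z = o1 x (o2 y z))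
    (h21 : ∀ x y z : A, o1 (o2 x y) z = o2 x (o1 y z))
    (hc1 : ∀ x y : A, o1 x y = o1 y x)
    (hc2 : ∀ x y : A, o2 x y = o2 y x)
    (star : A → A → A) (hstar : ∀ x y : A, star x y = o1 x y - o2 y x) :
    ∀ x y z : A,
      star (star x y) z - star x (star y z) =
        star (star y x) z - star y (star x z) :=
  matching_dialgebra_comm_preLie_general o1 o2 h1 h2 h12 h21 hc2 star hstar
end

section
/- Let (A, ∘₁, ∘₂) be a matching dialgebra over a field k in which both products ∘₁ and ∘₂ are commutative. Define x * y := x ∘₁ y − y ∘₂ x. Then (A, *) is an assosymmetric (bi-symmetric) algebra: for all x, y, z ∈ A, both (x * y) * z − x * (y * z) = (y * x) * z − y * (x * z) and (x * y) * z − x * (y * z) = (x * z) * y − x * (z * y) hold. -/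
/-!
The product `x * y = x ∘₁ y - y ∘₂ x` is in fact associative as soon as `∘₂` is commutative:
expanding both sides of `(x * y) * z = x * (y * z)` by bilinearity gives four terms each, and
they match in pairs via the associativity of `∘₁` and `∘₂` and the two matching identities
(after moving arguments of `∘₂` across with commutativity). An associative product has zero
associator, which is trivially symmetric in any two of its arguments.
-/

section MatchingProduct

variable {R A : Type*} [CommSemiring R] [AddCommGroup A] [Module R A]

def matchingProduct (o1 o2 : A →ₗ[R] A →ₗ[R] A) (x y : A) : A := o1 x y - o2 y x

theorem matchingProduct_assoc (o1 o2 : A →ₗ[R] A →ₗ[R] A)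
    (h1 : ∀ x y z : A, o1 (o1 x y) z = o1 x (o1 y z))
    (h2 : ∀ x y z : A, o2 (o2 x y) z = o2 x (o2 y z))
    (h12 : ∀ x y z : A, o2 (o1 x y) z = o1 x (o2 y z))
    (h21 : ∀ x y z : A, o1 (o2 x y) z = o2 x (o1 y z))
    (hc2 : ∀ x y : A, o2 x y = o2 y x) (x y z : A) :
    matchingProduct o1 o2 (matchingProduct o1 o2 x y) z =
      matchingProduct o1 o2 x (matchingProduct o1 o2 y z) := by
  have e21 : o1 (o2 y x) z = o2 (o1 y z) x := by rw [hc2 y x, h21, hc2]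
  have e12 : o2 z (o1 x y) = o1 x (o2 z y) := by rw [hc2 z, h12, hc2 y z]
  simp only [matchingProduct, map_sub, LinearMap.sub_apply]
  rw [h1, e21, e12, ← h2]
  abel

end MatchingProduct

theorem matching_dialgebra_comm_assosymmetric_general
    {k A : Type*} [Field k] [AddCommGroup A] [Module k A]
    (o1 o2 : A →ₗ[k] A →ₗ[k] A)
    (h1 : ∀ x y z : A, o1 (o1 x y) z = o1 x (o1 y z))
    (h2 : ∀ x y z : A, o2 (o2 x y) z = o2 x (o2 y z))
    (h12 : ∀ x y z : A, o2 (o1 x y) z = o1 x (o2 y z))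
    (h21 : ∀ x y z : A, o1 (o2 x y) z = o2 x (o1 y z))
    (hc2 : ∀ x y : A, o2 x y = o2 y x)
    (star : A → A → A) (hstar : ∀ x y : A, star x y = o1 x y - o2 y x) :
    (∀ x y z : A,
      star (star x y) z - star x (star y z) =
        star (star y x) z - star y (star x z)) ∧
    (∀ x y z : A,
      star (star x y) z - star x (star y z) =
        star (star x z) y - star x (star z y)) := by
  obtain rfl : star = matchingProduct o1 o2 := funext₂ hstar
  have assoc := matchingProduct_assoc o1 o2 h1 h2 h12 h21 hc2
  exact ⟨fun x y z => by simp only [assoc, sub_self], fun x y z => by simp only [assoc, sub_self]⟩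

/-- In a matching dialgebra `(A, o1, o2)` with both products commutative,
`x * y := x ∘₁ y - y ∘₂ x` defines an assosymmetric (bi-symmetric) algebra:
the associator is symmetric in its first two and in its last two arguments. -/
theorem matching_dialgebra_comm_assosymmetric
    {k A : Type*} [Field k] [AddCommGroup A] [Module k A]
    (o1 o2 : A →ₗ[k] A →ₗ[k] A)
    (h1 : ∀ x y z : A, o1 (o1 x y) z = o1 x (o1 y z))
    (h2 : ∀ x y z : A, o2 (o2 x y) z = o2 x (o2 y z))
    (h12 : ∀ x y z : A, o2 (o1 x y) z = o1 x (o2 y z))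
    (h21 : ∀ x y z : A, o1 (o2 x y) z = o2 x (o1 y z))
    (hc1 : ∀ x y : A, o1 x y = o1 y x)
    (hc2 : ∀ x y : A, o2 x y = o2 y x)
    (star : A → A → A) (hstar : ∀ x y : A, star x y = o1 x y - o2 y x) :
    (∀ x y z : A,
      star (star x y) z - star x (star y z) =
        star (star y x) z - star y (star x z)) ∧
    (∀ x y z : A,
      star (star x y) z - star x (star y z) =
        star (star x z) y - star x (star z y)) :=
  matching_dialgebra_comm_assosymmetric_general o1 o2 h1 h2 h12 h21 hc2 star hstar
end

section
/- Let (A, ∘₁, ∘₂) be a matching dialgebra over a field k such that x ∘₁ y − y ∘₁ x = x ∘₂ y − y ∘₂ x for all x, y ∈ A. Define the product x ∘ y := x ∘₁ y − y ∘₂ x and the bracket [x, y] := x ∘₁ y − y ∘₁ x. Then (A, ∘, [,]) is a left PostLie algebra: for all x, y, z ∈ A, (i) [,] is skew-symmetric and satisfies the Jacobi identity [[x,y],z] + [[z,x],y] + [[y,z],x] = 0; (ii) (x ∘ y) ∘ z − x ∘ (y ∘ z) − (y ∘ x) ∘ z + y ∘ (x ∘ z) − [x, y] ∘ z = 0; and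 (iii) z ∘ [x, y] − [z ∘ x, y] − [x, z ∘ y] = 0. -/
/-!
Write `[x, y]` for the common commutator of `∘₁` and `∘₂`. The hypothesis on the commutators says
exactly that the defect `δ = ∘₁ - ∘₂` is symmetric, and then `x ∘ y = [x, y] + δ(x, y)`.
The matching axioms make `δ` associative and balanced: `x ∘₁ δ(y, z) = δ(x ∘₁ y, z)` and
`δ(x, y) ∘₁ z = δ(x, y ∘₁ z)`. With symmetry, balance forces `δ([x, y], z) = 0` and
`[x, δ(y, z)] = [y, δ(x, z)]`. So `[x, y] ∘ z = [[x, y], z]`, and both PostLie identities reduce to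
the Jacobi identity, the correction terms in `δ` cancelling by these symmetries.
-/

namespace MatchingDialgebra

variable {R A : Type*} [CommRing R] [AddCommGroup A] [Module R A]

structure IsMatching_s13 (μ₁ μ₂ : A →ₗ[R] A →ₗ[R] A) : Prop where
  assoc₁ : ∀ x y z, μ₁ (μ₁ x y) z = μ₁ x (μ₁ y z)
  assoc₂ : ∀ x y z, μ₂ (μ₂ x y) z = μ₂ x (μ₂ y z)
  assoc₁₂ : ∀ x y z, μ₂ (μ₁ x y) z = μ₁ x (μ₂ y z)
  assoc₂₁ : ∀ x y z, μ₁ (μ₂ x y) z = μ₂ x (μ₁ y z)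

def commutator (μ : A →ₗ[R] A →ₗ[R] A) : A →ₗ[R] A →ₗ[R] A := μ - μ.flip

def defect (μ₁ μ₂ : A →ₗ[R] A →ₗ[R] A) : A →ₗ[R] A →ₗ[R] A := μ₁ - μ₂

def postLieProduct (μ₁ μ₂ : A →ₗ[R] A →ₗ[R] A) : A →ₗ[R] A →ₗ[R] A := μ₁ - μ₂.flip

theorem commutator_apply (μ : A →ₗ[R] A →ₗ[R] A) (x y : A) :
    commutator μ x y = μ x y - μ y x :=
  rfl

theorem commutator_swap (μ : A →ₗ[R] A →ₗ[R] A) (x y : A) :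
    commutator μ y x = -commutator μ x y :=
  (neg_sub _ _).symm

section Associative

variable {μ : A →ₗ[R] A →ₗ[R] A}

theorem commutator_jacobi (hμ : ∀ x y z, μ (μ x y) z = μ x (μ y z)) (x y z : A) :
    commutator μ (commutator μ x y) z + commutator μ (commutator μ z x) y +
      commutator μ (commutator μ y z) x = 0 := by
  simp only [commutator_apply, map_sub, LinearMap.sub_apply, hμ]
  abel

theorem commutator_leibniz (hμ : ∀ x y z, μ (μ x y) z = μ x (μ y z)) (x y z : A) :
    commutator μ x (commutator μ y z) =
      commutator μ (commutator μ x y) z + commutator μ y (commutator μ x z) := by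
  simp only [commutator_apply, map_sub, LinearMap.sub_apply, hμ]
  abel

end Associative

variable {μ₁ μ₂ : A →ₗ[R] A →ₗ[R] A}

theorem defect_symm (hcomm : commutator μ₁ = commutator μ₂) (x y : A) :
    defect μ₁ μ₂ x y = defect μ₁ μ₂ y x :=
  sub_eq_sub_iff_sub_eq_sub.mp (LinearMap.congr_fun₂ hcomm x y)

theorem postLieProduct_eq (hcomm : commutator μ₁ = commutator μ₂) :
    postLieProduct μ₁ μ₂ = commutator μ₁ + defect μ₁ μ₂ := by
  ext x y
  rw [LinearMap.add_apply, LinearMap.add_apply, defect_symm hcomm]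
  simp only [postLieProduct, commutator, defect, LinearMap.sub_apply, LinearMap.flip_apply]
  abel

namespace IsMatching_s13

theorem mul₁_defect (h : IsMatching_s13 μ₁ μ₂) (x y z : A) :
    μ₁ x (defect μ₁ μ₂ y z) = defect μ₁ μ₂ (μ₁ x y) z := by
  simp only [defect, LinearMap.sub_apply, map_sub, h.assoc₁, h.assoc₁₂]

theorem defect_mul₁ (h : IsMatching_s13 μ₁ μ₂) (x y z : A) :
    μ₁ (defect μ₁ μ₂ x y) z = defect μ₁ μ₂ x (μ₁ y z) := by
  simp only [defect, LinearMap.sub_apply, map_sub, h.assoc₁, h.assoc₂₁]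

theorem defect_assoc (h : IsMatching_s13 μ₁ μ₂) (x y z : A) :
    defect μ₁ μ₂ (defect μ₁ μ₂ x y) z = defect μ₁ μ₂ x (defect μ₁ μ₂ y z) := by
  simp only [defect, LinearMap.sub_apply, map_sub, h.assoc₁, h.assoc₂, h.assoc₁₂, h.assoc₂₁]
  abel

theorem defect_left_comm (h : IsMatching_s13 μ₁ μ₂)
    (hcomm : commutator μ₁ = commutator μ₂) (x y z : A) :
    defect μ₁ μ₂ x (defect μ₁ μ₂ y z) = defect μ₁ μ₂ y (defect μ₁ μ₂ x z) := by
  rw [← h.defect_assoc, defect_symm hcomm x y, h.defect_assoc]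

theorem defect_commutator (h : IsMatching_s13 μ₁ μ₂)
    (hcomm : commutator μ₁ = commutator μ₂) (x y z : A) :
    defect μ₁ μ₂ (commutator μ₁ x y) z = 0 := by
  have hδ := defect_symm hcomm
  calc defect μ₁ μ₂ (commutator μ₁ x y) z
      = μ₁ x (defect μ₁ μ₂ y z) - μ₁ y (defect μ₁ μ₂ x z) := by
        simp only [commutator_apply, map_sub, LinearMap.sub_apply, h.mul₁_defect]
    _ = defect μ₁ μ₂ y (μ₁ x z) - defect μ₁ μ₂ x (μ₁ y z) := by
        rw [hδ y, hδ x, h.mul₁_defect, h.mul₁_defect, hδ, hδ (μ₁ y z)]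
    _ = 0 := by
        rw [← h.defect_mul₁, ← h.defect_mul₁, hδ, sub_self]

theorem commutator_defect_comm (h : IsMatching_s13 μ₁ μ₂)
    (hcomm : commutator μ₁ = commutator μ₂) (x y z : A) :
    commutator μ₁ x (defect μ₁ μ₂ y z) = commutator μ₁ y (defect μ₁ μ₂ x z) := by
  have hδ := defect_symm hcomm
  rw [← sub_eq_zero]
  calc commutator μ₁ x (defect μ₁ μ₂ y z) - commutator μ₁ y (defect μ₁ μ₂ x z)
      = defect μ₁ μ₂ (commutator μ₁ x y) z + defect μ₁ μ₂ z (commutator μ₁ x y) := by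
        simp only [commutator_apply, map_sub, LinearMap.sub_apply, h.mul₁_defect]
        rw [hδ y z, hδ x z, h.defect_mul₁, h.defect_mul₁]
        abel
    _ = 0 := by
        rw [hδ z, h.defect_commutator hcomm, add_zero]

theorem postLieProduct_commutator_left (h : IsMatching_s13 μ₁ μ₂)
    (hcomm : commutator μ₁ = commutator μ₂) (x y z : A) :
    postLieProduct μ₁ μ₂ (commutator μ₁ x y) z = commutator μ₁ (commutator μ₁ x y) z := by
  rw [postLieProduct_eq hcomm, LinearMap.add_apply, LinearMap.add_apply,
    h.defect_commutator hcomm, add_zero]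

theorem postLieProduct_commutator_right (h : IsMatching_s13 μ₁ μ₂)
    (hcomm : commutator μ₁ = commutator μ₂) (x y z : A) :
    postLieProduct μ₁ μ₂ z (commutator μ₁ x y) = commutator μ₁ z (commutator μ₁ x y) := by
  rw [postLieProduct_eq hcomm, LinearMap.add_apply, LinearMap.add_apply, defect_symm hcomm,
    h.defect_commutator hcomm, add_zero]

theorem postLieProduct_commutator_left_eq_sub (h : IsMatching_s13 μ₁ μ₂)
    (hcomm : commutator μ₁ = commutator μ₂) (x y z : A) :
    postLieProduct μ₁ μ₂ (commutator μ₁ x y) z =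
      postLieProduct μ₁ μ₂ x (postLieProduct μ₁ μ₂ y z) -
        postLieProduct μ₁ μ₂ y (postLieProduct μ₁ μ₂ x z) := by
  have hx : defect μ₁ μ₂ x (commutator μ₁ y z) = 0 := by
    rw [defect_symm hcomm, h.defect_commutator hcomm]
  have hy : defect μ₁ μ₂ y (commutator μ₁ x z) = 0 := by
    rw [defect_symm hcomm, h.defect_commutator hcomm]
  rw [h.postLieProduct_commutator_left hcomm, postLieProduct_eq hcomm]
  simp only [LinearMap.add_apply, map_add, hx, hy, h.commutator_defect_comm hcomm x y z,
    h.defect_left_comm hcomm x y z]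
  linear_combination (norm := module) -commutator_leibniz h.assoc₁ x y z

theorem postLieProduct_commutator_right_eq_add (h : IsMatching_s13 μ₁ μ₂)
    (hcomm : commutator μ₁ = commutator μ₂) (x y z : A) :
    postLieProduct μ₁ μ₂ z (commutator μ₁ x y) =
      commutator μ₁ (postLieProduct μ₁ μ₂ z x) y + commutator μ₁ x (postLieProduct μ₁ μ₂ z y) := by
  have hδ : commutator μ₁ (defect μ₁ μ₂ z x) y + commutator μ₁ x (defect μ₁ μ₂ z y) = 0 := by
    rw [commutator_swap μ₁ y, defect_symm hcomm z x, h.commutator_defect_comm hcomm y x,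
      defect_symm hcomm z y, neg_add_cancel]
  rw [h.postLieProduct_commutator_right hcomm, commutator_leibniz h.assoc₁,
    postLieProduct_eq hcomm]
  simp only [LinearMap.add_apply, map_add]
  rw [add_add_add_comm, hδ, add_zero]

theorem postLieProduct_assoc_sub_assoc_swap (h : IsMatching_s13 μ₁ μ₂)
    (hcomm : commutator μ₁ = commutator μ₂) (x y z : A) :
    postLieProduct μ₁ μ₂ (postLieProduct μ₁ μ₂ x y) z -
        postLieProduct μ₁ μ₂ x (postLieProduct μ₁ μ₂ y z) -
        postLieProduct μ₁ μ₂ (postLieProduct μ₁ μ₂ y x) z +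
        postLieProduct μ₁ μ₂ y (postLieProduct μ₁ μ₂ x z) -
        postLieProduct μ₁ μ₂ (commutator μ₁ x y) z = 0 := by
  have hskew : postLieProduct μ₁ μ₂ x y - postLieProduct μ₁ μ₂ y x =
      commutator μ₁ x y + commutator μ₁ x y := by
    simp only [postLieProduct_eq hcomm, LinearMap.add_apply]
    rw [defect_symm hcomm x y, commutator_swap μ₁ x y]
    abel
  have hsub : postLieProduct μ₁ μ₂ (postLieProduct μ₁ μ₂ x y) z -
      postLieProduct μ₁ μ₂ (postLieProduct μ₁ μ₂ y x) z =
      postLieProduct μ₁ μ₂ (commutator μ₁ x y) z + postLieProduct μ₁ μ₂ (commutator μ₁ x y) z := by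
    rw [← LinearMap.sub_apply, ← map_sub, hskew, map_add, LinearMap.add_apply]
  linear_combination (norm := module) hsub + h.postLieProduct_commutator_left_eq_sub hcomm x y z

end IsMatching_s13

end MatchingDialgebra

/-- In a matching dialgebra `(A, o1, o2)` whose two commutator brackets coincide,
the product `x ∘ y := x ∘₁ y - y ∘₂ x` together with the bracket
`[x,y] := x ∘₁ y - y ∘₁ x` forms a left PostLie algebra. -/
theorem matching_dialgebra_postLie
    {k A : Type*} [Field k] [AddCommGroup A] [Module k A]
    (o1 o2 : A →ₗ[k] A →ₗ[k] A)
    (h1 : ∀ x y z : A, o1 (o1 x y) z = o1 x (o1 y z))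
    (h2 : ∀ x y z : A, o2 (o2 x y) z = o2 x (o2 y z))
    (h12 : ∀ x y z : A, o2 (o1 x y) z = o1 x (o2 y z))
    (h21 : ∀ x y z : A, o1 (o2 x y) z = o2 x (o1 y z))
    (hcomm : ∀ x y : A, o1 x y - o1 y x = o2 x y - o2 y x)
    (circ : A → A → A) (hcirc : ∀ x y : A, circ x y = o1 x y - o2 y x)
    (br : A → A → A) (hbr : ∀ x y : A, br x y = o1 x y - o1 y x) :
    (∀ x y : A, br x y = -br y x) ∧
    (∀ x y z : A, br (br x y) z + br (br z x) y + br (br y z) x = 0) ∧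
    (∀ x y z : A,
      circ (circ x y) z - circ x (circ y z) - circ (circ y x) z +
        circ y (circ x z) - circ (br x y) z = 0) ∧
    (∀ x y z : A, circ z (br x y) - br (circ z x) y - br x (circ z y) = 0) := by
  have h : MatchingDialgebra.IsMatching_s13 o1 o2 := ⟨h1, h2, h12, h21⟩
  have hcirc' : ∀ x y, circ x y = MatchingDialgebra.postLieProduct o1 o2 x y := hcirc
  have hbr' : ∀ x y, br x y = MatchingDialgebra.commutator o1 x y := hbr
  simp only [hcirc', hbr']
  have hcomm' : MatchingDialgebra.commutator o1 = MatchingDialgebra.commutator o2 :=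
    LinearMap.ext₂ hcomm
  exact ⟨fun x y => MatchingDialgebra.commutator_swap o1 y x,
    MatchingDialgebra.commutator_jacobi h1,
    h.postLieProduct_assoc_sub_assoc_swap hcomm',
    fun x y z => by rw [h.postLieProduct_commutator_right_eq_add hcomm']; abel⟩
end

section
/- Let V be a vector space over a field k. Then there exists a matching dialgebra (M, μ₁, μ₂) over k together with a linear map j : V → M with the following universal property: for every matching dialgebra (R, m₁, m₂) over k and every linear map f : V → R, there exists a unique linear map φ : M → R such that φ ∘ j = f and φ(μ₁(u, v)) = m₁(φ(u), φ(v)) and φ(μ₂(u, v)) = m₂(φ(u), φ(v)) for all u, v ∈ M (i.e. a unique homomorphism of matching dialgebras extending f). -/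
/-!
The free matching dialgebra on `V` is `V ⊗ T(V ⊕ V)` with
`(v ⊗ a) ∘ᵢ (w ⊗ b) = v ⊗ a ιᵢ(w) b`, where `ι₁, ι₂` are the two copies of `V` in the tensor
algebra (here `V ⊕ V` is `V × V`); both products and both mixed laws are then instances of associativity in `T(V ⊕ V)`.
Given a matching dialgebra `(R, m₁, m₂)` and `f : V → R`, the tensor algebra acts on `R` from the
right by `r · ι₁(x) = m₁ r (f x)` and `r · ι₂(y) = m₂ r (f y)`, and the extension of `f` is
`v ⊗ a ↦ f v · a`. The matching dialgebra laws say exactly that this action commutes with left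
multiplication by either product, which makes the extension a homomorphism; conversely every
homomorphism extending `f` is a map of right `T(V ⊕ V)`-modules, hence equal to it.
-/

universe u v w

open TensorProduct

def IsMatchingDialgebra_s14 {k R : Type*} [CommSemiring k] [AddCommMonoid R] [Module k R]
    (m₁ m₂ : R →ₗ[k] R →ₗ[k] R) : Prop :=
  (∀ x y z : R, m₁ (m₁ x y) z = m₁ x (m₁ y z)) ∧
  (∀ x y z : R, m₂ (m₂ x y) z = m₂ x (m₂ y z)) ∧
  (∀ x y z : R, m₂ (m₁ x y) z = m₁ x (m₂ y z)) ∧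
  (∀ x y z : R, m₁ (m₂ x y) z = m₂ x (m₁ y z))

section SandwichMul

variable {k V A : Type*} [CommSemiring k] [AddCommMonoid V] [Module k V]
  [Semiring A] [Algebra k A]

noncomputable def sandwichMul (g : V →ₗ[k] A) : V ⊗[k] A →ₗ[k] V ⊗[k] A →ₗ[k] V ⊗[k] A :=
  TensorProduct.curry <|
    TensorProduct.map LinearMap.id (LinearMap.mul' k A) ∘ₗ
    (TensorProduct.assoc k V A A).toLinearMap ∘ₗ
    TensorProduct.map LinearMap.id (LinearMap.mul' k A) ∘ₗ
    TensorProduct.map LinearMap.id (TensorProduct.map g LinearMap.id)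

@[simp]
theorem sandwichMul_tmul (g : V →ₗ[k] A) (v w : V) (a b : A) :
    sandwichMul g (v ⊗ₜ a) (w ⊗ₜ b) = v ⊗ₜ (a * (g w * b)) := by
  simp [sandwichMul]

theorem sandwichMul_assoc (g g' : V →ₗ[k] A) (x y z : V ⊗[k] A) :
    sandwichMul g' (sandwichMul g x y) z = sandwichMul g x (sandwichMul g' y z) := by
  induction x using TensorProduct.induction_on with
  | zero => simp
  | add x₁ x₂ h₁ h₂ => simp only [map_add, LinearMap.add_apply, h₁, h₂]
  | tmul v a =>
    induction y using TensorProduct.induction_on with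
    | zero => simp
    | add y₁ y₂ h₁ h₂ => simp only [map_add, LinearMap.add_apply, h₁, h₂]
    | tmul w b =>
      induction z using TensorProduct.induction_on with
      | zero => simp
      | add z₁ z₂ h₁ h₂ => simp only [map_add, h₁, h₂]
      | tmul u c => simp [mul_assoc]

theorem isMatchingDialgebra_sandwichMul (g₁ g₂ : V →ₗ[k] A) :
    IsMatchingDialgebra_s14 (sandwichMul g₁) (sandwichMul g₂) :=
  ⟨sandwichMul_assoc g₁ g₁, sandwichMul_assoc g₂ g₂,
    sandwichMul_assoc g₁ g₂, sandwichMul_assoc g₂ g₁⟩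

end SandwichMul

section RightAct

variable {k W R : Type*} [CommSemiring k] [AddCommMonoid W] [Module k W]
  [AddCommMonoid R] [Module k R] (ρ : W →ₗ[k] Module.End k R)

/-- The right action of `TensorAlgebra k W` on `R` in which `ι w` acts by `ρ w`. -/
noncomputable def rightAct : TensorAlgebra k W →ₗ[k] Module.End k R :=
  (MulOpposite.opLinearEquiv k).symm.toLinearMap ∘ₗ
    (TensorAlgebra.lift k ((MulOpposite.opLinearEquiv k).toLinearMap ∘ₗ ρ)).toLinearMap

@[simp]
theorem rightAct_one (r : R) : rightAct ρ 1 r = r := by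
  simp [rightAct]

theorem rightAct_mul (a b : TensorAlgebra k W) (r : R) :
    rightAct ρ (a * b) r = rightAct ρ b (rightAct ρ a r) := by
  simp [rightAct]

@[simp]
theorem rightAct_ι (w : W) (r : R) : rightAct ρ (TensorAlgebra.ι k w) r = ρ w r := by
  simp [rightAct]

theorem rightAct_comm_of_forall_ι {L : Module.End k R} (hL : ∀ w r, ρ w (L r) = L (ρ w r))
    (a : TensorAlgebra k W) (r : R) : rightAct ρ a (L r) = L (rightAct ρ a r) := by
  induction a using TensorAlgebra.induction generalizing r with
  | algebraMap c => simp [rightAct]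
  | ι w => simp [hL]
  | mul a b ha hb => rw [rightAct_mul, rightAct_mul, ha, hb]
  | add a b ha hb => simp only [map_add, LinearMap.add_apply, ha, hb]

theorem eq_rightAct_of_map_mul_ι (F : TensorAlgebra k W →ₗ[k] R)
    (hF : ∀ b w, F (b * TensorAlgebra.ι k w) = ρ w (F b)) (a : TensorAlgebra k W) :
    F a = rightAct ρ a (F 1) := by
  suffices h : ∀ b, F (b * a) = rightAct ρ a (F b) by simpa using h 1
  induction a using TensorAlgebra.induction with
  | algebraMap c => intro b; simp [Algebra.algebraMap_eq_smul_one, rightAct]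
  | ι w => intro b; simp [hF]
  | mul a₁ a₂ h₁ h₂ => intro b; rw [← mul_assoc, h₂, h₁, rightAct_mul]
  | add a₁ a₂ h₁ h₂ => intro b; simp only [mul_add, map_add, LinearMap.add_apply, h₁, h₂]

end RightAct

section ActLift

variable {k V W R : Type*} [CommSemiring k] [AddCommMonoid V] [Module k V]
  [AddCommMonoid W] [Module k W] [AddCommMonoid R] [Module k R]
  (ρ : W →ₗ[k] Module.End k R) (f : V →ₗ[k] R)

noncomputable def actLift : V ⊗[k] TensorAlgebra k W →ₗ[k] R :=
  TensorProduct.lift ((rightAct ρ).flip ∘ₗ f)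

@[simp]
theorem actLift_tmul (v : V) (a : TensorAlgebra k W) :
    actLift ρ f (v ⊗ₜ a) = rightAct ρ a (f v) := by
  simp [actLift]

theorem actLift_sandwichMul {m : R →ₗ[k] R →ₗ[k] R} {g : V →ₗ[k] TensorAlgebra k W}
    (hg : ∀ w r, rightAct ρ (g w) r = m r (f w))
    (hm : ∀ a r s, rightAct ρ a (m r s) = m r (rightAct ρ a s))
    (x y : V ⊗[k] TensorAlgebra k W) :
    actLift ρ f (sandwichMul g x y) = m (actLift ρ f x) (actLift ρ f y) := by
  induction x using TensorProduct.induction_on with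
  | zero => simp
  | add x₁ x₂ h₁ h₂ => simp only [map_add, LinearMap.add_apply, h₁, h₂]
  | tmul v a =>
    induction y using TensorProduct.induction_on with
    | zero => simp
    | add y₁ y₂ h₁ h₂ => simp only [map_add, h₁, h₂]
    | tmul w b => simp only [sandwichMul_tmul, actLift_tmul, rightAct_mul, hg, hm]

theorem eq_actLift {φ : V ⊗[k] TensorAlgebra k W →ₗ[k] R} (hf : ∀ v, φ (v ⊗ₜ 1) = f v)
    (hρ : ∀ v b w, φ (v ⊗ₜ (b * TensorAlgebra.ι k w)) = ρ w (φ (v ⊗ₜ b))) :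
    φ = actLift ρ f := by
  refine TensorProduct.ext' fun v a => ?_
  rw [actLift_tmul, ← hf v]
  exact eq_rightAct_of_map_mul_ι ρ (φ ∘ₗ TensorProduct.mk k V _ v) (hρ v) a

end ActLift

section Matching

variable {k V R : Type*} [CommSemiring k] [AddCommMonoid V] [Module k V]
  [AddCommMonoid R] [Module k R]

def matchingAct (m₁ m₂ : R →ₗ[k] R →ₗ[k] R) (f : V →ₗ[k] R) : V × V →ₗ[k] Module.End k R :=
  m₁.flip ∘ₗ f ∘ₗ LinearMap.fst k V V + m₂.flip ∘ₗ f ∘ₗ LinearMap.snd k V V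

variable (k V) in
noncomputable def ι₁ : V →ₗ[k] TensorAlgebra k (V × V) :=
  TensorAlgebra.ι k ∘ₗ LinearMap.inl k V V

variable (k V) in
noncomputable def ι₂ : V →ₗ[k] TensorAlgebra k (V × V) :=
  TensorAlgebra.ι k ∘ₗ LinearMap.inr k V V

theorem ι_eq_ι₁_add_ι₂ (x y : V) : TensorAlgebra.ι k (x, y) = ι₁ k V x + ι₂ k V y := by
  simp [ι₁, ι₂, ← map_add]

variable (m₁ m₂ : R →ₗ[k] R →ₗ[k] R) (f : V →ₗ[k] R)

@[simp]
theorem rightAct_matchingAct_ι₁ (x : V) (r : R) :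
    rightAct (matchingAct m₁ m₂ f) (ι₁ k V x) r = m₁ r (f x) := by
  simp [ι₁, matchingAct]

@[simp]
theorem rightAct_matchingAct_ι₂ (x : V) (r : R) :
    rightAct (matchingAct m₁ m₂ f) (ι₂ k V x) r = m₂ r (f x) := by
  simp [ι₂, matchingAct]

variable {m₁ m₂}

theorem rightAct_matchingAct_comm (hR : IsMatchingDialgebra_s14 m₁ m₂) (a : TensorAlgebra k (V × V))
    (r s : R) :
    rightAct (matchingAct m₁ m₂ f) a (m₁ r s) = m₁ r (rightAct (matchingAct m₁ m₂ f) a s) ∧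
      rightAct (matchingAct m₁ m₂ f) a (m₂ r s) = m₂ r (rightAct (matchingAct m₁ m₂ f) a s) := by
  obtain ⟨h₁₁, h₂₂, h₁₂, h₂₁⟩ := hR
  constructor <;> refine rightAct_comm_of_forall_ι _ (fun ⟨x, y⟩ t => ?_) a s <;>
    simp [matchingAct, h₁₁, h₂₂, h₁₂, h₂₁]

theorem actLift_matchingAct_sandwichMul (hR : IsMatchingDialgebra_s14 m₁ m₂)
    (x y : V ⊗[k] TensorAlgebra k (V × V)) :
    actLift (matchingAct m₁ m₂ f) f (sandwichMul (ι₁ k V) x y) =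
        m₁ (actLift (matchingAct m₁ m₂ f) f x) (actLift (matchingAct m₁ m₂ f) f y) ∧
      actLift (matchingAct m₁ m₂ f) f (sandwichMul (ι₂ k V) x y) =
        m₂ (actLift (matchingAct m₁ m₂ f) f x) (actLift (matchingAct m₁ m₂ f) f y) :=
  ⟨actLift_sandwichMul _ f (rightAct_matchingAct_ι₁ m₁ m₂ f)
      (fun a r s => (rightAct_matchingAct_comm f hR a r s).1) x y,
    actLift_sandwichMul _ f (rightAct_matchingAct_ι₂ m₁ m₂ f)
      (fun a r s => (rightAct_matchingAct_comm f hR a r s).2) x y⟩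

theorem eq_actLift_matchingAct {φ : V ⊗[k] TensorAlgebra k (V × V) →ₗ[k] R}
    (hf : ∀ v, φ (v ⊗ₜ 1) = f v)
    (hφ₁ : ∀ x y, φ (sandwichMul (ι₁ k V) x y) = m₁ (φ x) (φ y))
    (hφ₂ : ∀ x y, φ (sandwichMul (ι₂ k V) x y) = m₂ (φ x) (φ y)) :
    φ = actLift (matchingAct m₁ m₂ f) f := by
  refine eq_actLift _ f hf fun v b ⟨x, y⟩ => ?_
  -- `v ⊗ b ιᵢ(x) = (v ⊗ b) ∘ᵢ (x ⊗ 1)`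
  have h₁ := hφ₁ (v ⊗ₜ b) (x ⊗ₜ 1)
  have h₂ := hφ₂ (v ⊗ₜ b) (y ⊗ₜ 1)
  simp only [sandwichMul_tmul, mul_one, hf] at h₁ h₂
  simp [ι_eq_ι₁_add_ι₂, mul_add, tmul_add, h₁, h₂, matchingAct]

end Matching

/-- For every `k`-vector space `V` there is a free matching dialgebra on `V`:
a matching dialgebra `(M, μ₁, μ₂)` with a linear map `j : V → M` such that every
linear map `f` from `V` to a matching dialgebra `(R, m₁, m₂)` extends uniquely to
a homomorphism `φ : M → R` of matching dialgebras with `φ ∘ j = f`. -/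
theorem exists_free_matching_dialgebra
    {k : Type w} [Field k] (V : Type u) [AddCommGroup V] [Module k V] :
    ∃ (M : ModuleCat.{max u w} k) (μ₁ μ₂ : M →ₗ[k] M →ₗ[k] M) (j : V →ₗ[k] M),
      ((∀ x y z : M, μ₁ (μ₁ x y) z = μ₁ x (μ₁ y z)) ∧
       (∀ x y z : M, μ₂ (μ₂ x y) z = μ₂ x (μ₂ y z)) ∧
       (∀ x y z : M, μ₂ (μ₁ x y) z = μ₁ x (μ₂ y z)) ∧
       (∀ x y z : M, μ₁ (μ₂ x y) z = μ₂ x (μ₁ y z))) ∧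
      ∀ (R : ModuleCat.{v} k) (m₁ m₂ : R →ₗ[k] R →ₗ[k] R),
        ((∀ x y z : R, m₁ (m₁ x y) z = m₁ x (m₁ y z)) ∧
         (∀ x y z : R, m₂ (m₂ x y) z = m₂ x (m₂ y z)) ∧
         (∀ x y z : R, m₂ (m₁ x y) z = m₁ x (m₂ y z)) ∧
         (∀ x y z : R, m₁ (m₂ x y) z = m₂ x (m₁ y z))) →
        ∀ f : V →ₗ[k] R,
          ∃! φ : M →ₗ[k] R,
            (∀ v : V, φ (j v) = f v) ∧
            (∀ u w : M, φ (μ₁ u w) = m₁ (φ u) (φ w)) ∧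
            (∀ u w : M, φ (μ₂ u w) = m₂ (φ u) (φ w)) := by
  refine ⟨ModuleCat.of k (V ⊗[k] TensorAlgebra k (V × V)), sandwichMul (ι₁ k V),
    sandwichMul (ι₂ k V), (TensorProduct.mk k V _).flip 1,
    isMatchingDialgebra_sandwichMul _ _, fun R m₁ m₂ hR f => ?_⟩
  refine ⟨actLift (matchingAct m₁ m₂ f) f, ⟨fun v => ?_, fun x y => ?_, fun x y => ?_⟩, ?_⟩
  · simp
  · exact (actLift_matchingAct_sandwichMul f hR x y).1
  · exact (actLift_matchingAct_sandwichMul f hR x y).2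
  · rintro φ ⟨hf, hφ₁, hφ₂⟩
    exact eq_actLift_matchingAct f hf hφ₁ hφ₂
end
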